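/- Let (X,d,μ) be an RD-space with parameters κ≤n and μ(X)=∞, and let K be a strongly singular generalized kernel on X with parameters (m,ε,α,p₀). Then there exists C>0 such that for all z,z₀∈X with d(z,z₀)≥1, every x∈X with d(x,z₀) ≤ 2d(z,z₀), and all f₁,…,f_m∈L^{p₀'}_{loc}(X), ∫_{{ȳ∈X^m : ρ(ȳ,z̄₀) ≥ 2d(z,z₀)}} |K(z,y₁,…,y_m) − K(z₀,y₁,…,y_m)| ∏_{j=1}^m |f_j(y_j)| dμ(y₁)⋯dμ(y_m) ≤ C·d(z,z₀)^{ε−ε/α}·𝓜_{p₀'}(f⃗)(x), where z̄₀=(z₀,…,z₀) and ρ(ȳ,z̄₀)=max_{1≤j≤m} d(y_j,z₀). -/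

import Mathlib

/-!
Split the region `ρ(ȳ, z̄₀) ≥ 2d`, `d = d(z, z₀) ≥ 1`, into the dyadic annuli
`2^k d ≤ ρ ≤ 2^(k+1) d`, `k ≥ 1`. On each annulus Hölder's inequality with exponents `p₀, p₀'`
separates the kernel difference, which the kernel condition (in its regime `t = 1`, `β = n`)
bounds by `d^(ε - nm/p₀' - ε/α) 2^(-k(nm/p₀' + ε/α))`, from `∏ |f_j|`, whose `L^{p₀'}` norm on
the annulus is at most `μ(B)^(m/p₀') 𝓜_{p₀'}(f⃗)(x)` for `B = B(z₀, 2^(k+2) d)`: the annulus lies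
in `B^m` and `x ∈ B`. Doubling together with the uniform bound on unit balls gives
`μ(B(z₀, R)) ≲ R^n` for `R ≥ 1`, which cancels the factor `(2^k d)^(nm/p₀')` and leaves
`d^(ε - ε/α) 2^(-kε/α)`, a geometric series in `k`.
-/

open MeasureTheory Metric ENNReal Set Bornology
open scoped BigOperators NNReal ENNReal

noncomputable section

section Defs

variable {X : Type*} [MetricSpace X] [MeasurableSpace X] [BorelSpace X]

/-- Weighted `L^p` norm `(∫ |f|^p w dμ)^{1/p}` of a real-valued function. -/
def lpNormW (μ : Measure X) (p : ℝ) (w : X → ℝ) (f : X → ℝ) : ℝ≥0∞ :=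
  (∫⁻ x, ENNReal.ofReal (|f x| ^ p * w x) ∂μ) ^ (1 / p)

/-- Weighted `L^p` norm of an `ℝ≥0∞`-valued function. -/
def lpNormW' (μ : Measure X) (p : ℝ) (w : X → ℝ) (g : X → ℝ≥0∞) : ℝ≥0∞ :=
  (∫⁻ x, g x ^ p * ENNReal.ofReal (w x) ∂μ) ^ (1 / p)

/-- Weighted weak `L^p` (Lorentz `L^{p,∞}`) norm of a real-valued function. -/
def weakLpNormW (μ : Measure X) (p : ℝ) (w : X → ℝ) (f : X → ℝ) : ℝ≥0∞ :=
  ⨆ (t : ℝ) (_ : 0 < t),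
    ENNReal.ofReal t * (∫⁻ x in {y | t < |f y|}, ENNReal.ofReal (w x) ∂μ) ^ (1 / p)

/-- Weighted weak `L^p` norm of an `ℝ≥0∞`-valued function. -/
def weakLpNormW' (μ : Measure X) (p : ℝ) (w : X → ℝ) (g : X → ℝ≥0∞) : ℝ≥0∞ :=
  ⨆ (t : ℝ) (_ : 0 < t),
    ENNReal.ofReal t * (∫⁻ x in {y | ENNReal.ofReal t < g y}, ENNReal.ofReal (w x) ∂μ) ^ (1 / p)

/-- The BMO seminorm `sup_B μ(B)⁻¹ ∫_B |f - f_B| dμ` (supremum over balls). -/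
def bmoNorm (μ : Measure X) (f : X → ℝ) : ℝ≥0∞ :=
  ⨆ (c : X) (r : ℝ) (_ : 0 < r),
    (μ (ball c r))⁻¹ *
      ∫⁻ y in ball c r, ENNReal.ofReal |f y - ⨍ z in ball c r, f z ∂μ| ∂μ

/-- Membership in `BMO(X)`. -/
def MemBMO (μ : Measure X) (f : X → ℝ) : Prop :=
  LocallyIntegrable f μ ∧ bmoNorm μ f < ⊤

/-- The Hardy–Littlewood maximal function. -/
def hlMaximal (μ : Measure X) (f : X → ℝ) (x : X) : ℝ≥0∞ :=
  ⨆ (c : X) (r : ℝ) (_ : 0 < r) (_ : x ∈ ball c r),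
    (μ (ball c r))⁻¹ * ∫⁻ y in ball c r, ENNReal.ofReal |f y| ∂μ

/-- The sharp maximal function `M^♯ f`. -/
def sharpMaximal (μ : Measure X) (f : X → ℝ) (x : X) : ℝ≥0∞ :=
  ⨆ (c : X) (r : ℝ) (_ : 0 < r) (_ : x ∈ ball c r),
    (μ (ball c r))⁻¹ *
      ∫⁻ y in ball c r, ENNReal.ofReal |f y - ⨍ z in ball c r, f z ∂μ| ∂μ

/-- `M_δ^♯ f = (M^♯(|f|^δ))^{1/δ}`. -/
def sharpMaximalPow (μ : Measure X) (δ : ℝ) (f : X → ℝ) (x : X) : ℝ≥0∞ :=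
  (sharpMaximal μ (fun y => |f y| ^ δ) x) ^ (1 / δ)

/-- The multilinear maximal operator `𝓜(f⃗)`. -/
def multiMaximal (μ : Measure X) {m : ℕ} (f : Fin m → X → ℝ) (x : X) : ℝ≥0∞ :=
  ⨆ (c : X) (r : ℝ) (_ : 0 < r) (_ : x ∈ ball c r),
    ∏ j, ((μ (ball c r))⁻¹ * ∫⁻ y in ball c r, ENNReal.ofReal |f j y| ∂μ)

/-- `𝓜_s(f⃗) = (𝓜(|f₁|^s,…,|f_m|^s))^{1/s}`. -/
def multiMaximalPow (μ : Measure X) {m : ℕ} (s : ℝ) (f : Fin m → X → ℝ) (x : X) : ℝ≥0∞ :=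
  (multiMaximal μ (fun j y => |f j y| ^ s) x) ^ (1 / s)

/-- The Muckenhoupt `A₁` condition on a metric measure space. -/
def MemA1 (μ : Measure X) (w : X → ℝ) : Prop :=
  (∀ x, 0 ≤ w x) ∧ LocallyIntegrable w μ ∧
  ∃ C : ℝ, 0 < C ∧ ∀ (c : X) (r : ℝ), 0 < r →
    (μ (ball c r))⁻¹ * (∫⁻ y in ball c r, ENNReal.ofReal (w y) ∂μ) ≤
      ENNReal.ofReal C * essInf (fun y => ENNReal.ofReal (w y)) (μ.restrict (ball c r))

/-- The Muckenhoupt `A_p` condition, `1 < p < ∞`, on a metric measure space. -/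
def MemAp (μ : Measure X) (p : ℝ) (w : X → ℝ) : Prop :=
  (∀ x, 0 ≤ w x) ∧ LocallyIntegrable w μ ∧
  ∃ C : ℝ, 0 < C ∧ ∀ (c : X) (r : ℝ), 0 < r →
    ((μ (ball c r))⁻¹ * ∫⁻ y in ball c r, ENNReal.ofReal (w y) ∂μ) *
      ((μ (ball c r))⁻¹ *
        ∫⁻ y in ball c r, ENNReal.ofReal (w y ^ (-(1 / (p - 1)))) ∂μ) ^ (p - 1) ≤
      ENNReal.ofReal C

/-- `A_∞ = ⋃_{p ≥ 1} A_p`. -/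
def MemAinf (μ : Measure X) (w : X → ℝ) : Prop :=
  MemA1 μ w ∨ ∃ p : ℝ, 1 < p ∧ MemAp μ p w

/-- The `j`-th factor in the multilinear `A_{p⃗}` condition over a ball `B`:
`((μ B)⁻¹ ∫_B w^{1-p'} dμ)^{1/p'}`, read as `(ess inf_B w)⁻¹` when `p = 1`. -/
def apFactor (μ : Measure X) (pj : ℝ) (wj : X → ℝ) (B : Set X) : ℝ≥0∞ :=
  if pj = 1 then (essInf (fun y => ENNReal.ofReal (wj y)) (μ.restrict B))⁻¹
  else ((μ B)⁻¹ * ∫⁻ y in B, ENNReal.ofReal (wj y ^ (-(1 / (pj - 1)))) ∂μ) ^ (1 - 1 / pj)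

/-- The multiple-weight condition `A_{p⃗}` of Lerner–Grafakos type on a metric
measure space, where `1/p = ∑ 1/p_j` and `ν_{w⃗} = ∏ w_j^{p/p_j}`. -/
def MemAVec (μ : Measure X) {m : ℕ} (p : Fin m → ℝ) (w : Fin m → X → ℝ) : Prop :=
  (∀ j x, 0 ≤ w j x) ∧ (∀ j, LocallyIntegrable (w j) μ) ∧
  ∃ C : ℝ, 0 < C ∧ ∀ (c : X) (r : ℝ), 0 < r →
    ((μ (ball c r))⁻¹ *
        ∫⁻ y in ball c r,
          ENNReal.ofReal (∏ j, w j y ^ ((∑ i, 1 / p i)⁻¹ / p j)) ∂μ) ^ (∑ i, 1 / p i) *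
      ∏ j, apFactor μ (p j) (w j) (ball c r) ≤ ENNReal.ofReal C

/-- Generalized weighted Morrey norm `sup_B (φ(w(B))⁻¹ ∫_B |f|^p w dμ)^{1/p}`. -/
def morreyNormW (μ : Measure X) (p : ℝ) (φ : ℝ → ℝ) (w : X → ℝ) (f : X → ℝ) : ℝ≥0∞ :=
  ⨆ (c : X) (r : ℝ) (_ : 0 < r),
    ((ENNReal.ofReal
        (φ (∫⁻ y in ball c r, ENNReal.ofReal (w y) ∂μ).toReal))⁻¹ *
      ∫⁻ y in ball c r, ENNReal.ofReal (|f y| ^ p * w y) ∂μ) ^ (1 / p)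

/-- Generalized weighted Morrey norm of an `ℝ≥0∞`-valued function. -/
def morreyNormW' (μ : Measure X) (p : ℝ) (φ : ℝ → ℝ) (w : X → ℝ) (g : X → ℝ≥0∞) : ℝ≥0∞ :=
  ⨆ (c : X) (r : ℝ) (_ : 0 < r),
    ((ENNReal.ofReal
        (φ (∫⁻ y in ball c r, ENNReal.ofReal (w y) ∂μ).toReal))⁻¹ *
      ∫⁻ y in ball c r, g y ^ p * ENNReal.ofReal (w y) ∂μ) ^ (1 / p)

/-- An RD-space: a space of homogeneous type whose (regular Borel) measure is
doubling (with upper dimension `n = log₂ C₁`) and reverse doubling with exponent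
`κ ≤ n`; we also assume `μ(X) = ∞` throughout (which, together with the
finiteness of the measure of balls, forces `diam X = ∞`, so the reverse doubling
condition is stated for all radii and all `λ ≥ 1`). -/
structure IsRDSpace (μ : Measure X) (κ n : ℝ) : Prop where
  regular : μ.Regular
  ball_pos : ∀ (x : X) (r : ℝ), 0 < r → 0 < μ (ball x r)
  ball_lt_top : ∀ (x : X) (r : ℝ), 0 < r → μ (ball x r) < ⊤
  kappa_pos : 0 < κ
  kappa_le_n : κ ≤ n
  doubling : ∃ C₁ : ℝ, 1 ≤ C₁ ∧ n = Real.logb 2 C₁ ∧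
    ∀ (x : X) (r : ℝ), 0 < r → μ (ball x (2 * r)) ≤ ENNReal.ofReal C₁ * μ (ball x r)
  reverse_doubling : ∃ C₂ : ℝ, 0 < C₂ ∧ C₂ ≤ 1 ∧
    ∀ (x : X) (r lam : ℝ), 0 < r → 1 ≤ lam →
      ENNReal.ofReal (C₂ * lam ^ κ) * μ (ball x r) ≤ μ (ball x (lam * r))
  measure_univ_eq_top : μ Set.univ = ⊤

/-- There is a positive nondecreasing function `Φ` on `[0,∞)` with
`μ(B(x,r)) ≍ Φ(r)` uniformly in `x` and `r > 0`. -/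
def HasMeasureFunction (μ : Measure X) : Prop :=
  ∃ Φ : ℝ → ℝ, (∀ r : ℝ, 0 < r → 0 < Φ r) ∧ MonotoneOn Φ (Set.Ici (0 : ℝ)) ∧
    ∃ c₁ c₂ : ℝ, 0 < c₁ ∧ 0 < c₂ ∧ ∀ (x : X) (r : ℝ), 0 < r →
      ENNReal.ofReal (c₁ * Φ r) ≤ μ (ball x r) ∧ μ (ball x r) ≤ ENNReal.ofReal (c₂ * Φ r)

/-- `ρ(ȳ, x̄) = max_{1 ≤ j ≤ m} d(y_j, x)`. -/
def rho {m : ℕ} (x : X) (y : Fin m → X) : ℝ := ⨆ j, dist (y j) x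

/-- A strongly singular generalized kernel on an RD-space with parameters
`(m, ε, α, p₀)` (`p₀'` the conjugate exponent of `p₀`, RD-parameters `κ ≤ n`). -/
def IsSSGKernel (μ : Measure X) (m : ℕ) (κ n ε α p₀ p₀' : ℝ)
    (K : X → (Fin m → X) → ℝ) : Prop :=
  LocallyIntegrableOn (fun z : X × (Fin m → X) => K z.1 z.2)
    {z : X × (Fin m → X) | ¬ ∀ j, z.2 j = z.1} (μ.prod (Measure.pi fun _ : Fin m => μ)) ∧
  ∃ C_K : ℝ, 0 < C_K ∧ ∀ x x' : X, x ≠ x' → ∀ k : ℕ, 1 ≤ k →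
    (∫⁻ y in {y : Fin m → X |
        2 ^ k * dist x x' ^ (if 1 ≤ dist x x' then (1 : ℝ) else α) ≤ rho x y ∧
        rho x y ≤ 2 ^ (k + 1) * dist x x' ^ (if 1 ≤ dist x x' then (1 : ℝ) else α)},
      ENNReal.ofReal (|K x y - K x' y| ^ p₀) ∂(Measure.pi fun _ : Fin m => μ)) ^ (1 / p₀)
    ≤ ENNReal.ofReal (C_K *
        dist x x' ^ (ε - (if 1 ≤ dist x x' then (1 : ℝ) else α) *
          ((if 1 ≤ dist x x' then n else κ) * m / p₀' + ε / α)) *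
        2 ^ (-(k : ℝ) * (n * m / p₀' + ε / α)))

/-- An `m`-linear strongly singular integral operator with generalized kernel
(`m`-GSSIO) on an RD-space. -/
structure IsGSSIO (μ : Measure X) (m : ℕ) (κ n ε α p₀ p₀' q : ℝ)
    (r l : Fin m → ℝ) (T : (Fin m → X → ℝ) → X → ℝ) : Prop where
  m_pos : 0 < m
  eps_pos : 0 < ε
  alpha_pos : 0 < α
  alpha_le_one : α ≤ 1
  p0_gt_one : 1 < p₀
  p0_conj : 1 / p₀ + 1 / p₀' = 1
  kernel : ∃ K : X → (Fin m → X) → ℝ, IsSSGKernel μ m κ n ε α p₀ p₀' K ∧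
    ∀ f : Fin m → X → ℝ,
      (∀ j, ∃ L : ℝ≥0, LipschitzWith L (f j)) →
      (∀ j, IsBounded (tsupport (f j))) →
      ∀ x, x ∉ ⋂ j, tsupport (f j) →
        T f x = ∫ y : Fin m → X, K x y * ∏ j, f j (y j) ∂(Measure.pi fun _ : Fin m => μ)
  r_ge_one : ∀ j, 1 ≤ r j
  weak_r : ∃ C : ℝ, 0 < C ∧ ∀ f : Fin m → X → ℝ, (∀ j, Measurable (f j)) →
    weakLpNormW μ (∑ j, 1 / r j)⁻¹ (fun _ => 1) (T f) ≤
      ENNReal.ofReal C * ∏ j, lpNormW μ (r j) (fun _ => 1) (f j)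
  l_ge_one : ∀ j, 1 ≤ l j
  lq_pos : 0 < (∑ j, 1 / l j)⁻¹ / q
  lq_le : (∑ j, 1 / l j)⁻¹ / q ≤ α * κ / n
  weak_l : ∃ C : ℝ, 0 < C ∧ ∀ f : Fin m → X → ℝ, (∀ j, Measurable (f j)) →
    weakLpNormW μ q (fun _ => 1) (T f) ≤
      ENNReal.ofReal C * ∏ j, lpNormW μ (l j) (fun _ => 1) (f j)

end Defs

namespace MeasureTheory

theorem lintegral_fin_nat_prod_eq_prod {n : ℕ} {E : Type*} [MeasurableSpace E]
    (μ : Measure E) [SigmaFinite μ] {g : Fin n → E → ℝ≥0∞} (hg : ∀ i, Measurable (g i)) :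
    ∫⁻ x : Fin n → E, ∏ i, g i (x i) ∂(Measure.pi fun _ ↦ μ) = ∏ i, ∫⁻ x, g i x ∂μ := by
  induction n with
  | zero => simp
  | succ n ih =>
    have hg_tail : Measurable fun x : Fin n → E ↦ ∏ i, g i.succ (x i) :=
      Finset.measurable_prod _ fun i _ ↦ (hg i.succ).comp (measurable_pi_apply i)
    calc
      _ = ∫⁻ x, (fun y : E × (Fin n → E) ↦ g 0 y.1 * ∏ i, g i.succ (y.2 i))
            (MeasurableEquiv.piFinSuccAbove (fun _ ↦ E) 0 x) ∂(Measure.pi fun _ ↦ μ) := by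
        simp [MeasurableEquiv.piFinSuccAbove, Fin.prod_univ_succ, Fin.tail]
      _ = ∫⁻ y : E × (Fin n → E), g 0 y.1 * ∏ i, g i.succ (y.2 i)
            ∂(μ.prod (Measure.pi fun _ ↦ μ)) :=
        (measurePreserving_piFinSuccAbove (fun _ ↦ μ) 0).lintegral_comp
          (((hg 0).comp measurable_fst).mul (hg_tail.comp measurable_snd))
      _ = ∏ i, ∫⁻ x, g i x ∂μ := by
        rw [lintegral_prod_mul (hg 0).aemeasurable hg_tail.aemeasurable, ih fun i ↦ hg i.succ,
          Fin.prod_univ_succ]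

theorem setLIntegral_univ_pi_fin_nat_prod_eq_prod {n : ℕ} {E : Type*} [MeasurableSpace E]
    (μ : Measure E) [SigmaFinite μ] {g : Fin n → E → ℝ≥0∞} (hg : ∀ i, Measurable (g i))
    (s : Set E) :
    ∫⁻ x in Set.univ.pi fun _ ↦ s, ∏ i, g i (x i) ∂(Measure.pi fun _ ↦ μ) =
      ∏ i, ∫⁻ x in s, g i x ∂μ := by
  rw [Measure.restrict_pi_pi, lintegral_fin_nat_prod_eq_prod _ hg]

theorem lintegral_mul_le_Lp_mul_Lq_of_measurable_right {α : Type*} [MeasurableSpace α]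
    (μ : Measure α) {p q : ℝ} (hpq : p.HolderConjugate q) (f : α → ℝ≥0∞) {g : α → ℝ≥0∞}
    (hg : Measurable g) (hg_top : ∀ a, g a ≠ ∞) :
    ∫⁻ a, f a * g a ∂μ ≤ (∫⁻ a, f a ^ p ∂μ) ^ (1 / p) * (∫⁻ a, g a ^ q ∂μ) ^ (1 / q) := by
  obtain ⟨G, hG, hGle, hGeq⟩ := exists_measurable_le_lintegral_eq μ fun a ↦ f a * g a
  -- `f` need not be measurable: pass to a measurable minorant `G` of `f * g` with the same
  -- integral; then `G / g` is a measurable minorant of `f` with `G ≤ (G / g) * g`.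
  have hG_le : ∀ a, G a ≤ G a / g a * g a := fun a ↦ by
    rcases eq_or_ne (g a) 0 with h0 | h0
    · simpa [h0] using hGle a
    · rw [ENNReal.div_mul_cancel h0 (hg_top a)]
  have hGf : ∀ a, G a / g a ≤ f a := fun a ↦ ENNReal.div_le_of_le_mul (hGle a)
  calc ∫⁻ a, f a * g a ∂μ = ∫⁻ a, G a ∂μ := hGeq
    _ ≤ ∫⁻ a, (G a / g a) * g a ∂μ := lintegral_mono hG_le
    _ ≤ (∫⁻ a, (G a / g a) ^ p ∂μ) ^ (1 / p) * (∫⁻ a, g a ^ q ∂μ) ^ (1 / q) :=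
      ENNReal.lintegral_mul_le_Lp_mul_Lq μ hpq (hG.div hg).aemeasurable hg.aemeasurable
    _ ≤ _ := by
      gcongr with a
      exacts [one_div_nonneg.2 hpq.nonneg, hpq.nonneg, hGf a]

theorem sigmaFinite_of_measure_ball_lt_top {X : Type*} [PseudoMetricSpace X] [MeasurableSpace X]
    {μ : Measure X} (x₀ : X) (h : ∀ r : ℝ, 0 < r → μ (ball x₀ r) < ∞) : SigmaFinite μ :=
  ⟨⟨⟨fun k : ℕ ↦ ball x₀ (k + 1), fun _ ↦ trivial, fun _ ↦ h _ (by positivity),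
    iUnion_ball_nat_succ x₀⟩⟩⟩

end MeasureTheory

section Doubling

variable {X : Type*} [PseudoMetricSpace X] [MeasurableSpace X] {μ : Measure X}

theorem measure_ball_two_pow_mul_le {C : ℝ≥0∞}
    (hdb : ∀ (x : X) (r : ℝ), 0 < r → μ (ball x (2 * r)) ≤ C * μ (ball x r))
    (x : X) {r : ℝ} (hr : 0 < r) (N : ℕ) : μ (ball x (2 ^ N * r)) ≤ C ^ N * μ (ball x r) := by
  induction N with
  | zero => simp
  | succ N ih =>
    calc μ (ball x (2 ^ (N + 1) * r)) = μ (ball x (2 * (2 ^ N * r))) := by ring_nf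
      _ ≤ C * μ (ball x (2 ^ N * r)) := hdb x _ (by positivity)
      _ ≤ C * (C ^ N * μ (ball x r)) := by gcongr
      _ = C ^ (N + 1) * μ (ball x r) := by ring

theorem measure_ball_le_rpow_logb_mul {C : ℝ} (hC : 1 ≤ C)
    (hdb : ∀ (x : X) (r : ℝ), 0 < r → μ (ball x (2 * r)) ≤ ENNReal.ofReal C * μ (ball x r))
    (x : X) {R : ℝ} (hR : 1 ≤ R) :
    μ (ball x R) ≤ ENNReal.ofReal (C * R ^ Real.logb 2 C) * μ (ball x 1) := by
  obtain ⟨N, hNR, hRN⟩ := exists_nat_pow_near hR one_lt_two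
  have hC0 : 0 < C := zero_lt_one.trans_le hC
  have hCN : C ^ N ≤ R ^ Real.logb 2 C := by
    calc C ^ N = ((2 : ℝ) ^ Real.logb 2 C) ^ N := by rw [Real.rpow_logb two_pos (by norm_num) hC0]
      _ = ((2 : ℝ) ^ N) ^ Real.logb 2 C := by
        rw [← Real.rpow_natCast, ← Real.rpow_mul zero_le_two, ← Real.rpow_natCast,
          ← Real.rpow_mul zero_le_two, mul_comm]
      _ ≤ R ^ Real.logb 2 C :=
        Real.rpow_le_rpow (by positivity) hNR (Real.logb_nonneg one_lt_two hC)
  calc μ (ball x R) ≤ μ (ball x (2 ^ (N + 1) * 1)) :=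
        measure_mono (ball_subset_ball (by simpa using hRN.le))
    _ ≤ ENNReal.ofReal C ^ (N + 1) * μ (ball x 1) := measure_ball_two_pow_mul_le hdb x one_pos _
    _ = ENNReal.ofReal (C * C ^ N) * μ (ball x 1) := by
      rw [← ENNReal.ofReal_pow hC0.le, pow_succ']
    _ ≤ ENNReal.ofReal (C * R ^ Real.logb 2 C) * μ (ball x 1) := by gcongr

end Doubling

theorem IsRDSpace.exists_measure_ball_le_rpow {X : Type*} [MetricSpace X] [MeasurableSpace X]
    {μ : Measure X} {κ n : ℝ} (hRD : IsRDSpace μ κ n) (hΦ : HasMeasureFunction μ) :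
    ∃ c : ℝ, 0 < c ∧ ∀ (x : X) (R : ℝ), 1 ≤ R → μ (ball x R) ≤ ENNReal.ofReal (c * R ^ n) := by
  obtain ⟨C, hC, rfl, hdb⟩ := hRD.doubling
  obtain ⟨Φ, hΦpos, -, _, c₂, -, hc₂, hΦ⟩ := hΦ
  refine ⟨C * (c₂ * Φ 1), mul_pos (zero_lt_one.trans_le hC) (mul_pos hc₂ (hΦpos 1 one_pos)),
    fun x R hR ↦ ?_⟩
  calc μ (ball x R) ≤ ENNReal.ofReal (C * R ^ Real.logb 2 C) * μ (ball x 1) :=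
        measure_ball_le_rpow_logb_mul hC hdb x hR
    _ ≤ ENNReal.ofReal (C * R ^ Real.logb 2 C) * ENNReal.ofReal (c₂ * Φ 1) := by
      gcongr
      exact (hΦ x 1 one_pos).2
    _ = ENNReal.ofReal (C * (c₂ * Φ 1) * R ^ Real.logb 2 C) := by
      rw [← ENNReal.ofReal_mul (by positivity)]; ring_nf

theorem ENNReal.tsum_ofReal_mul_geometric {a r : ℝ} (ha : 0 ≤ a) (hr₀ : 0 ≤ r) (hr₁ : r < 1) :
    ∑' k : ℕ, ENNReal.ofReal (a * r ^ k) = ENNReal.ofReal (a / (1 - r)) := by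
  rw [← ENNReal.ofReal_tsum_of_nonneg (fun k ↦ by positivity)
    ((summable_geometric_of_lt_one hr₀ hr₁).mul_left a), tsum_mul_left,
    tsum_geometric_of_lt_one hr₀ hr₁, div_eq_mul_inv]

theorem exists_two_pow_mul_le_and_le {d t : ℝ} (hd : 0 < d) (ht : 2 * d ≤ t) :
    ∃ k : ℕ, 2 ^ (k + 1) * d ≤ t ∧ t ≤ 2 ^ (k + 2) * d := by
  obtain ⟨k, hk, hk'⟩ := exists_nat_pow_near ((one_le_div (by positivity)).2 ht) one_lt_two
  refine ⟨k, ?_, ?_⟩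
  · calc 2 ^ (k + 1) * d = 2 ^ k * (2 * d) := by ring
      _ ≤ t := (le_div_iff₀ (by positivity)).1 hk
  · calc t ≤ 2 ^ (k + 1) * (2 * d) := ((div_le_iff₀ (by positivity)).1 hk'.le)
      _ = 2 ^ (k + 2) * d := by ring

section Rho

variable {X : Type*} [MetricSpace X] {m : ℕ}

theorem dist_le_rho (x : X) (y : Fin m → X) (j : Fin m) : dist (y j) x ≤ rho x y :=
  le_ciSup (f := fun i ↦ dist (y i) x) (Set.finite_range _).bddAbove j

theorem mem_univ_pi_ball_of_rho_lt {x : X} {y : Fin m → X} {R : ℝ} (h : rho x y < R) :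
    y ∈ Set.univ.pi fun _ ↦ ball x R :=
  fun j _ ↦ (dist_le_rho x y j).trans_lt h

theorem setOf_two_mul_le_rho_subset_iUnion (x : X) {d : ℝ} (hd : 0 < d) :
    {y : Fin m → X | 2 * d ≤ rho x y} ⊆
      ⋃ k : ℕ, {y | 2 ^ (k + 1) * d ≤ rho x y ∧ rho x y ≤ 2 ^ (k + 2) * d} := fun _ hy ↦
  Set.mem_iUnion.2 (exists_two_pow_mul_le_and_le hd hy)

end Rho

section Maximal

variable {X : Type*} [MetricSpace X] [MeasurableSpace X] {μ : Measure X} {m : ℕ}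

theorem prod_setLIntegral_ball_le_multiMaximal (g : Fin m → X → ℝ) {c x : X} {r : ℝ}
    (hr : 0 < r) (hx : x ∈ ball c r) (h₀ : μ (ball c r) ≠ 0) (h_top : μ (ball c r) ≠ ∞) :
    ∏ j, ∫⁻ y in ball c r, ENNReal.ofReal |g j y| ∂μ ≤ μ (ball c r) ^ m * multiMaximal μ g x := by
  calc ∏ j, ∫⁻ y in ball c r, ENNReal.ofReal |g j y| ∂μ
      = ∏ j, μ (ball c r) * ((μ (ball c r))⁻¹ * ∫⁻ y in ball c r, ENNReal.ofReal |g j y| ∂μ) := by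
        simp only [← mul_assoc, ENNReal.mul_inv_cancel h₀ h_top, one_mul]
    _ = μ (ball c r) ^ m *
          ∏ j, ((μ (ball c r))⁻¹ * ∫⁻ y in ball c r, ENNReal.ofReal |g j y| ∂μ) := by
        rw [Finset.prod_mul_distrib, Finset.prod_const, Finset.card_univ, Fintype.card_fin]
    _ ≤ μ (ball c r) ^ m * multiMaximal μ g x := by
        gcongr
        exact le_iSup₂_of_le c r (le_iSup₂_of_le (f := fun _ _ ↦ _) hr hx le_rfl)

theorem setLIntegral_prod_rpow_le_multiMaximalPow [SigmaFinite μ] {f : Fin m → X → ℝ}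
    (hf : ∀ j, Measurable (f j)) {s : ℝ} (hs : 0 < s) {A : Set (Fin m → X)} {c x : X} {r : ℝ}
    (hr : 0 < r) (hA : A ⊆ Set.univ.pi fun _ ↦ ball c r) (hx : x ∈ ball c r)
    (h₀ : μ (ball c r) ≠ 0) (h_top : μ (ball c r) ≠ ∞) :
    (∫⁻ y in A, (∏ j, ENNReal.ofReal |f j (y j)|) ^ s ∂(Measure.pi fun _ ↦ μ)) ^ (1 / s) ≤
      μ (ball c r) ^ ((m : ℝ) / s) * multiMaximalPow μ s f x := by
  have hpow : ∀ j t, ENNReal.ofReal |f j t| ^ s = ENNReal.ofReal |(|f j t| ^ s)| := fun j t ↦ by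
    rw [ENNReal.ofReal_rpow_of_nonneg (abs_nonneg _) hs.le,
      abs_of_nonneg (Real.rpow_nonneg (abs_nonneg _) s)]
  have hmeas : ∀ j, Measurable fun t ↦ ENNReal.ofReal |(|f j t| ^ s)| := fun j ↦ by fun_prop
  have hint : ∫⁻ y in A, (∏ j, ENNReal.ofReal |f j (y j)|) ^ s ∂(Measure.pi fun _ ↦ μ) ≤
      μ (ball c r) ^ m * multiMaximal μ (fun j t ↦ |f j t| ^ s) x :=
    calc ∫⁻ y in A, (∏ j, ENNReal.ofReal |f j (y j)|) ^ s ∂(Measure.pi fun _ ↦ μ)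
        = ∫⁻ y in A, ∏ j, ENNReal.ofReal |(|f j (y j)| ^ s)| ∂(Measure.pi fun _ ↦ μ) := by
          simp only [← ENNReal.prod_rpow_of_nonneg hs.le, hpow]
      _ ≤ ∫⁻ y in Set.univ.pi fun _ ↦ ball c r, ∏ j, ENNReal.ofReal |(|f j (y j)| ^ s)|
            ∂(Measure.pi fun _ ↦ μ) := lintegral_mono_set hA
      _ = ∏ j, ∫⁻ t in ball c r, ENNReal.ofReal |(|f j t| ^ s)| ∂μ :=
          setLIntegral_univ_pi_fin_nat_prod_eq_prod μ hmeas _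
      _ ≤ μ (ball c r) ^ m * multiMaximal μ (fun j t ↦ |f j t| ^ s) x :=
          prod_setLIntegral_ball_le_multiMaximal _ hr hx h₀ h_top
  calc _ ≤ (μ (ball c r) ^ m * multiMaximal μ (fun j t ↦ |f j t| ^ s) x) ^ (1 / s) := by
        gcongr
    _ = μ (ball c r) ^ ((m : ℝ) / s) * multiMaximalPow μ s f x := by
        rw [ENNReal.mul_rpow_of_nonneg _ _ (by positivity), ← ENNReal.rpow_natCast,
          ← ENNReal.rpow_mul, mul_one_div, multiMaximalPow]

theorem setLIntegral_mul_prod_le_multiMaximalPow [SigmaFinite μ] {p q : ℝ}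
    (hpq : p.HolderConjugate q)
    (F : (Fin m → X) → ℝ≥0∞) {f : Fin m → X → ℝ} (hf : ∀ j, Measurable (f j))
    {A : Set (Fin m → X)} {c x : X} {r : ℝ} (hr : 0 < r) (hA : A ⊆ Set.univ.pi fun _ ↦ ball c r)
    (hx : x ∈ ball c r) (h₀ : μ (ball c r) ≠ 0) (h_top : μ (ball c r) ≠ ∞) :
    ∫⁻ y in A, F y * ∏ j, ENNReal.ofReal |f j (y j)| ∂(Measure.pi fun _ ↦ μ) ≤
      (∫⁻ y in A, F y ^ p ∂(Measure.pi fun _ ↦ μ)) ^ (1 / p) *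
        (μ (ball c r) ^ ((m : ℝ) / q) * multiMaximalPow μ q f x) :=
  (lintegral_mul_le_Lp_mul_Lq_of_measurable_right _ hpq F (by fun_prop)
    fun _ ↦ ENNReal.prod_ne_top fun _ _ ↦ ENNReal.ofReal_ne_top).trans <| by
      gcongr
      exact setLIntegral_prod_rpow_le_multiMaximalPow hf hpq.symm.pos hr hA hx h₀ h_top

end Maximal

section Kernel

variable {X : Type*} [MetricSpace X] [MeasurableSpace X] {μ : Measure X}
  {κ n : ℝ} {m : ℕ} {ε α p₀ p₀' : ℝ} {K : X → (Fin m → X) → ℝ}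

theorem IsSSGKernel.exists_annulus_bound_of_one_le_dist
    (hK : IsSSGKernel μ m κ n ε α p₀ p₀' K) :
    ∃ C : ℝ, 0 < C ∧ ∀ x x' : X, 1 ≤ dist x x' → ∀ k : ℕ, 1 ≤ k →
      (∫⁻ y in {y : Fin m → X | 2 ^ k * dist x x' ≤ rho x y ∧ rho x y ≤ 2 ^ (k + 1) * dist x x'},
        ENNReal.ofReal (|K x y - K x' y| ^ p₀) ∂(Measure.pi fun _ : Fin m ↦ μ)) ^ (1 / p₀) ≤
      ENNReal.ofReal (C * dist x x' ^ (ε - (n * m / p₀' + ε / α)) *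
        2 ^ (-(k : ℝ) * (n * m / p₀' + ε / α))) := by
  obtain ⟨-, C, hC, hbound⟩ := hK
  refine ⟨C, hC, fun x x' hxx' k hk ↦ ?_⟩
  have hne : x ≠ x' := fun h ↦ by norm_num [h] at hxx'
  simpa only [if_pos hxx', Real.rpow_one, one_mul] using hbound x x' hne k hk

theorem IsSSGKernel.exists_setLIntegral_annulus_le_measure_ball (hRD : IsRDSpace μ κ n)
    (hpq : p₀.HolderConjugate p₀') (hK : IsSSGKernel μ m κ n ε α p₀ p₀' K) :
    ∃ C : ℝ, 0 < C ∧ ∀ z z₀ x : X, 1 ≤ dist z z₀ → dist x z₀ ≤ 2 * dist z z₀ →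
      ∀ f : Fin m → X → ℝ, (∀ j, Measurable (f j)) → ∀ k : ℕ,
        ∫⁻ y in {y : Fin m → X | 2 ^ (k + 1) * dist z z₀ ≤ rho z₀ y ∧
            rho z₀ y ≤ 2 ^ (k + 2) * dist z z₀},
          ENNReal.ofReal |K z y - K z₀ y| * ∏ j, ENNReal.ofReal |f j (y j)|
            ∂(Measure.pi fun _ : Fin m ↦ μ) ≤
        ENNReal.ofReal (C * dist z z₀ ^ (ε - (n * m / p₀' + ε / α)) *
            2 ^ (-((k + 1 : ℕ) : ℝ) * (n * m / p₀' + ε / α))) *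
          (μ (ball z₀ (2 ^ (k + 3) * dist z z₀)) ^ ((m : ℝ) / p₀') *
            multiMaximalPow μ p₀' f x) := by
  obtain ⟨C, hC, hker⟩ := hK.exists_annulus_bound_of_one_le_dist
  refine ⟨C, hC, fun z z₀ x hd hx f hf k ↦ ?_⟩
  set d := dist z z₀
  have := sigmaFinite_of_measure_ball_lt_top z₀ (hRD.ball_lt_top z₀)
  set R := 2 ^ (k + 3) * d
  have h2d : ∀ i, i < k + 3 → 2 ^ i * d < R := fun i hi ↦
    mul_lt_mul_of_pos_right (pow_lt_pow_right₀ one_lt_two hi) (zero_lt_one.trans_le hd)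
  have hR₀ : 0 < R := mul_pos (by positivity) (zero_lt_one.trans_le hd)
  have hA : {y : Fin m → X | 2 ^ (k + 1) * d ≤ rho z₀ y ∧ rho z₀ y ≤ 2 ^ (k + 2) * d} ⊆
      Set.univ.pi fun _ ↦ ball z₀ R := fun y hy ↦
    mem_univ_pi_ball_of_rho_lt (hy.2.trans_lt (h2d _ (by omega)))
  have hxR : x ∈ ball z₀ R := hx.trans_lt (by simpa using h2d 1 (by omega))
  refine (setLIntegral_mul_prod_le_multiMaximalPow hpq _ hf hR₀ hA hxR
    (hRD.ball_pos z₀ R hR₀).ne' (hRD.ball_lt_top z₀ R hR₀).ne).trans ?_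
  gcongr
  simpa only [dist_comm z₀ z, abs_sub_comm (K z₀ _),
    ENNReal.ofReal_rpow_of_nonneg (abs_nonneg _) hpq.nonneg]
    using hker z₀ z (by rwa [dist_comm]) (k + 1) le_add_self

theorem IsSSGKernel.exists_setLIntegral_annulus_le (hRD : IsRDSpace μ κ n)
    (hΦ : HasMeasureFunction μ) (hpq : p₀.HolderConjugate p₀')
    (hK : IsSSGKernel μ m κ n ε α p₀ p₀' K) :
    ∃ C : ℝ, 0 < C ∧ ∀ z z₀ x : X, 1 ≤ dist z z₀ → dist x z₀ ≤ 2 * dist z z₀ →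
      ∀ f : Fin m → X → ℝ, (∀ j, Measurable (f j)) → ∀ k : ℕ,
        ∫⁻ y in {y : Fin m → X | 2 ^ (k + 1) * dist z z₀ ≤ rho z₀ y ∧
            rho z₀ y ≤ 2 ^ (k + 2) * dist z z₀},
          ENNReal.ofReal |K z y - K z₀ y| * ∏ j, ENNReal.ofReal |f j (y j)|
            ∂(Measure.pi fun _ : Fin m ↦ μ) ≤
        ENNReal.ofReal (C * dist z z₀ ^ (ε - ε / α) * (2 ^ (-(ε / α))) ^ k) *
          multiMaximalPow μ p₀' f x := by
  obtain ⟨C_K, hC_K, hannulus⟩ := hK.exists_setLIntegral_annulus_le_measure_ball hRD hpq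
  obtain ⟨Cμ, hCμ, hball⟩ := hRD.exists_measure_ball_le_rpow hΦ
  set b := n * m / p₀'
  set q := ε / α
  set s := (m : ℝ) / p₀'
  have hs : 0 ≤ s := div_nonneg m.cast_nonneg hpq.symm.nonneg
  refine ⟨C_K * Cμ ^ s * 2 ^ (2 * b - q), by positivity, fun z z₀ x hd hx f hf k ↦ ?_⟩
  set d := dist z z₀
  have hd₀ : 0 < d := zero_lt_one.trans_le hd
  set R := 2 ^ (k + 3) * d
  have hR : 1 ≤ R := one_le_mul_of_one_le_of_one_le (one_le_pow₀ one_le_two) hd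
  have hRs : (Cμ * R ^ n) ^ s = Cμ ^ s * 2 ^ ((k + 3 : ℝ) * b) * d ^ b := by
    rw [Real.mul_rpow hCμ.le (by positivity), ← Real.rpow_mul (by positivity), ← mul_div_assoc,
      Real.mul_rpow (by positivity) hd₀.le, ← Real.rpow_natCast 2 (k + 3),
      ← Real.rpow_mul zero_le_two]
    push_cast
    ring
  calc _ ≤ _ := hannulus z z₀ x hd hx f hf k
    _ ≤ ENNReal.ofReal (C_K * d ^ (ε - (b + q)) * 2 ^ (-((k + 1 : ℕ) : ℝ) * (b + q))) *
          (ENNReal.ofReal (Cμ * R ^ n) ^ s * multiMaximalPow μ p₀' f x) := by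
      gcongr
      exact hball z₀ R hR
    _ = ENNReal.ofReal (C_K * d ^ (ε - (b + q)) * 2 ^ (-((k + 1 : ℕ) : ℝ) * (b + q)) *
          (Cμ * R ^ n) ^ s) * multiMaximalPow μ p₀' f x := by
      rw [ENNReal.ofReal_rpow_of_nonneg (by positivity) hs, ← mul_assoc,
        ← ENNReal.ofReal_mul (by positivity)]
    _ = ENNReal.ofReal (C_K * Cμ ^ s * 2 ^ (2 * b - q) * d ^ (ε - q) * (2 ^ (-q)) ^ k) *
          multiMaximalPow μ p₀' f x := by
      congr 2
      rw [hRs, ← Real.rpow_natCast (2 ^ (-q)) k, ← Real.rpow_mul zero_le_two]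
      calc _ = C_K * Cμ ^ s * (2 ^ (-((k + 1 : ℕ) : ℝ) * (b + q)) * 2 ^ ((k + 3 : ℝ) * b)) *
            (d ^ (ε - (b + q)) * d ^ b) := by ring
        _ = C_K * Cμ ^ s * (2 ^ (2 * b - q) * 2 ^ (-q * k)) * d ^ (ε - q) := by
          rw [← Real.rpow_add two_pos, ← Real.rpow_add two_pos, ← Real.rpow_add hd₀]
          push_cast
          ring_nf
        _ = _ := by ring

end Kernel

theorem kernel_estimate_far_general
    {X : Type*} [MetricSpace X] [MeasurableSpace X]
    (μ : Measure X) (κ n : ℝ) (hRD : IsRDSpace μ κ n) (hΦ : HasMeasureFunction μ)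
    (m : ℕ) (ε α p₀ p₀' : ℝ)
    (hε : 0 < ε) (hα0 : 0 < α)
    (hp₀ : 1 < p₀) (hconj : 1 / p₀ + 1 / p₀' = 1)
    (K : X → (Fin m → X) → ℝ) (hK : IsSSGKernel μ m κ n ε α p₀ p₀' K) :
    ∃ C : ℝ, 0 < C ∧ ∀ z z₀ x : X, 1 ≤ dist z z₀ → dist x z₀ ≤ 2 * dist z z₀ →
      ∀ f : Fin m → X → ℝ,
        (∀ j, Measurable (f j)) →
        (∀ j, ∀ (c : X) (rad : ℝ), 0 < rad →
          ∫⁻ y in ball c rad, ENNReal.ofReal (|f j y| ^ p₀') ∂μ < ⊤) →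
        (∫⁻ y in {y : Fin m → X | 2 * dist z z₀ ≤ rho z₀ y},
            ENNReal.ofReal |K z y - K z₀ y| * ∏ j, ENNReal.ofReal |f j (y j)|
              ∂(Measure.pi fun _ : Fin m => μ))
          ≤ ENNReal.ofReal (C * dist z z₀ ^ (ε - ε / α)) *
              multiMaximalPow μ p₀' f x := by
  have hpq : p₀.HolderConjugate p₀' :=
    Real.holderConjugate_iff.2 ⟨hp₀, by simpa only [one_div] using hconj⟩
  obtain ⟨C, hC, hannulus⟩ := hK.exists_setLIntegral_annulus_le hRD hΦ hpq
  set r : ℝ := 2 ^ (-(ε / α))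
  have hr₀ : 0 ≤ r := by positivity
  have hr₁ : r < 1 := Real.rpow_lt_one_of_one_lt_of_neg one_lt_two (neg_neg_of_pos (by positivity))
  refine ⟨C / (1 - r), div_pos hC (sub_pos.2 hr₁), fun z z₀ x hd hx f hf _ ↦ ?_⟩
  calc _ ≤ ∫⁻ y in ⋃ k : ℕ, {y : Fin m → X | 2 ^ (k + 1) * dist z z₀ ≤ rho z₀ y ∧
            rho z₀ y ≤ 2 ^ (k + 2) * dist z z₀},
          ENNReal.ofReal |K z y - K z₀ y| * ∏ j, ENNReal.ofReal |f j (y j)|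
            ∂(Measure.pi fun _ : Fin m ↦ μ) :=
        lintegral_mono_set (setOf_two_mul_le_rho_subset_iUnion z₀ (zero_lt_one.trans_le hd))
    _ ≤ ∑' k : ℕ, ENNReal.ofReal (C * dist z z₀ ^ (ε - ε / α) * r ^ k) *
          multiMaximalPow μ p₀' f x :=
        (lintegral_iUnion_le _ _).trans (ENNReal.tsum_le_tsum (hannulus z z₀ x hd hx f hf))
    _ = ENNReal.ofReal (C / (1 - r) * dist z z₀ ^ (ε - ε / α)) * multiMaximalPow μ p₀' f x := by
        rw [ENNReal.tsum_mul_right, ENNReal.tsum_ofReal_mul_geometric (by positivity) hr₀ hr₁,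
          div_mul_eq_mul_div, mul_div_right_comm]

/-- Kernel estimate (large distance case, from the proof of Theorem 2.1):
for a strongly singular generalized kernel `K`, if `d(z,z₀) ≥ 1` and
`d(x,z₀) ≤ 2 d(z,z₀)`, then
`∫_{ρ(ȳ,z̄₀) ≥ 2 d(z,z₀)} |K(z,ȳ) − K(z₀,ȳ)| ∏ |f_j(y_j)| dμ⃗(ȳ)
  ≤ C d(z,z₀)^{ε−ε/α} 𝓜_{p₀'}(f⃗)(x)`. -/
theorem kernel_estimate_far
    {X : Type*} [MetricSpace X] [MeasurableSpace X] [BorelSpace X]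
    (μ : Measure X) (κ n : ℝ) (hRD : IsRDSpace μ κ n) (hΦ : HasMeasureFunction μ)
    (m : ℕ) (hm : 0 < m) (ε α p₀ p₀' : ℝ)
    (hε : 0 < ε) (hα0 : 0 < α) (hα1 : α ≤ 1)
    (hp₀ : 1 < p₀) (hconj : 1 / p₀ + 1 / p₀' = 1)
    (K : X → (Fin m → X) → ℝ) (hK : IsSSGKernel μ m κ n ε α p₀ p₀' K) :
    ∃ C : ℝ, 0 < C ∧ ∀ z z₀ x : X, 1 ≤ dist z z₀ → dist x z₀ ≤ 2 * dist z z₀ →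
      ∀ f : Fin m → X → ℝ,
        (∀ j, Measurable (f j)) →
        (∀ j, ∀ (c : X) (rad : ℝ), 0 < rad →
          ∫⁻ y in ball c rad, ENNReal.ofReal (|f j y| ^ p₀') ∂μ < ⊤) →
        (∫⁻ y in {y : Fin m → X | 2 * dist z z₀ ≤ rho z₀ y},
            ENNReal.ofReal |K z y - K z₀ y| * ∏ j, ENNReal.ofReal |f j (y j)|
              ∂(Measure.pi fun _ : Fin m => μ))
          ≤ ENNReal.ofReal (C * dist z z₀ ^ (ε - ε / α)) *
              multiMaximalPow μ p₀' f x :=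
  kernel_estimate_far_general μ κ n hRD hΦ m ε α p₀ p₀' hε hα0 hp₀ hconj K hK
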